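/- Let u : ℝ → ℝ be a bounded nonconstant C³ solution of u'' = F'(u) with F ∈ C². Set m = inf u, M = sup u, and c_u = inf over y of F(u(y)). Then c_u = min(F(m), F(M)), and F(t) > c_u for every t with m < t < M. -/

import Mathlib

/-!
Along a solution the energy `F (u x) - u' x ^ 2 / 2` is constant, and since a bounded function
has points where `u'` is arbitrarily small, this constant is `c_u`. Hence `F ≥ c_u` on the range
of `u`, which is dense in `[m, M]`. If `F t = c_u` at an interior point `t = u x₀`, then `t` is a
critical point of `F` and `u' x₀ = 0`, so `(t, 0)` is an equilibrium of the locally Lipschitz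
system `(u, u')' = (u', F' u)`; by uniqueness of its solutions `u ≡ t`, contradicting
nonconstancy. So the minimum of `F` on `[m, M]`, which is at most `c_u`, sits at an endpoint.
-/

open Set Filter Topology

theorem eq_of_hasDerivAt_of_apply_eq_zero {E : Type*} [NormedAddCommGroup E] [NormedSpace ℝ E]
    {v : E → E} (hv : ContDiff ℝ 1 v) {γ : ℝ → E} (hγ : ∀ x, HasDerivAt γ (v (γ x)) x)
    {x₀ : ℝ} (h₀ : v (γ x₀) = 0) (x : ℝ) : γ x = γ x₀ := by
  obtain ⟨K, U, hU, hK⟩ := hv.locallyLipschitz (γ x₀)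
  have hγc : Continuous γ := continuous_iff_continuousAt.2 fun x ↦ (hγ x).continuousAt
  set S := {x | γ x = γ x₀}
  suffices IsClopen S from (this.eq_univ ⟨x₀, rfl⟩).ge (mem_univ x)
  refine ⟨isClosed_eq hγc continuous_const, isOpen_iff_mem_nhds.2 fun x₁ (hx₁ : γ x₁ = γ x₀) ↦ ?_⟩
  have hγU : ∀ᶠ x in 𝓝 x₁, γ x ∈ U := hγc.continuousAt.preimage_mem_nhds (hx₁ ▸ hU)
  -- the constant curve at the equilibrium `γ x₀` is a second solution through `γ x₁`
  exact ODE_solution_unique_of_eventually (v := fun _ ↦ v) (s := fun _ ↦ U) (g := fun _ ↦ γ x₀)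
    (.of_forall fun _ ↦ hK) (hγU.mono fun x hx ↦ ⟨hγ x, hx⟩)
    (.of_forall fun _ ↦ ⟨h₀ ▸ hasDerivAt_const _ _, mem_of_mem_nhds hU⟩) hx₁

section NewtonEquation

variable {F u : ℝ → ℝ}

theorem exists_abs_deriv_lt_of_abs_le {B ε : ℝ} (hu : Differentiable ℝ u) (hB : ∀ x, |u x| ≤ B)
    (hε : 0 < ε) : ∃ x, |deriv u x| < ε := by
  have hB₀ : 0 ≤ B := (abs_nonneg _).trans (hB 0)
  obtain ⟨L, hL, hεL⟩ : ∃ L, 0 < L ∧ ε * L = 2 * B + 1 :=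
    ⟨(2 * B + 1) / ε, by positivity, by field_simp⟩
  obtain ⟨x, -, hx⟩ := exists_deriv_eq_slope u hL hu.continuous.continuousOn
    fun y _ ↦ (hu y).differentiableWithinAt
  refine ⟨x, ?_⟩
  rw [hx, sub_zero, abs_div, abs_of_pos hL, div_lt_iff₀ hL, hεL]
  linarith [abs_sub (u L) (u 0), hB L, hB 0]

theorem energy_eq (hF : Differentiable ℝ F) (hu : Differentiable ℝ u)
    (hu' : Differentiable ℝ (deriv u)) (hode : ∀ x, deriv (deriv u) x = deriv F (u x)) (x y : ℝ) :
    F (u x) - deriv u x ^ 2 / 2 = F (u y) - deriv u y ^ 2 / 2 := by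
  have h : ∀ x, HasDerivAt (fun x ↦ F (u x) - deriv u x ^ 2 / 2) 0 x := fun x ↦ by
    have := ((hF (u x)).hasDerivAt.comp x (hu x).hasDerivAt).sub
      (((hu' x).hasDerivAt.pow 2).div_const 2)
    exact this.congr_deriv (by rw [hode]; ring)
  exact is_const_of_deriv_eq_zero (fun x ↦ (h x).differentiableAt) (fun x ↦ (h x).deriv) x y

theorem energy_eq_iInf (hF : Differentiable ℝ F) (hu : Differentiable ℝ u)
    (hu' : Differentiable ℝ (deriv u)) (hode : ∀ x, deriv (deriv u) x = deriv F (u x))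
    {B : ℝ} (hB : ∀ x, |u x| ≤ B) (x : ℝ) :
    F (u x) - deriv u x ^ 2 / 2 = ⨅ y, F (u y) := by
  have hE := energy_eq hF hu hu' hode x
  have hle : ∀ y, F (u x) - deriv u x ^ 2 / 2 ≤ F (u y) := fun y ↦ by
    linarith [hE y, sq_nonneg (deriv u y)]
  refine le_antisymm (le_ciInf hle) (le_of_forall_pos_lt_add fun ε hε ↦ ?_)
  obtain ⟨y, hy⟩ :=
    exists_abs_deriv_lt_of_abs_le hu hB (Real.sqrt_pos.2 (by positivity : 0 < 2 * ε))
  have hy2 : deriv u y ^ 2 < 2 * ε := by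
    rw [← sq_abs]; exact (Real.lt_sqrt (abs_nonneg _)).1 hy
  calc ⨅ y, F (u y) ≤ F (u y) := ciInf_le ⟨_, forall_mem_range.2 hle⟩ y
    _ < F (u x) - deriv u x ^ 2 / 2 + ε := by linarith [hE y]

theorem eq_of_deriv_eq_zero_of_deriv_eq_zero (hF : ContDiff ℝ 1 (deriv F))
    (hu : Differentiable ℝ u) (hu' : Differentiable ℝ (deriv u))
    (hode : ∀ x, deriv (deriv u) x = deriv F (u x)) {x₀ : ℝ} (hu₀ : deriv u x₀ = 0)
    (hF₀ : deriv F (u x₀) = 0) (x : ℝ) : u x = u x₀ := by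
  have hv : ContDiff ℝ 1 fun p : ℝ × ℝ ↦ (p.2, deriv F p.1) :=
    contDiff_snd.prodMk (hF.comp contDiff_fst)
  have := eq_of_hasDerivAt_of_apply_eq_zero hv (γ := fun x ↦ (u x, deriv u x))
    (fun x ↦ hode x ▸ (hu x).hasDerivAt.prodMk (hu' x).hasDerivAt) (x₀ := x₀)
    (by simp [hu₀, hF₀]) x
  exact congrArg Prod.fst this

theorem energy_lt_of_eventually_le (hF : ContDiff ℝ 1 (deriv F)) (hu : Differentiable ℝ u)
    (hu' : Differentiable ℝ (deriv u)) (hode : ∀ x, deriv (deriv u) x = deriv F (u x))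
    {a b : ℝ} (hab : u a ≠ u b) {c t : ℝ} (hc : ∀ x, F (u x) - deriv u x ^ 2 / 2 = c)
    (ht : t ∈ range u) (hlocal : ∀ᶠ s in 𝓝 t, c ≤ F s) : c < F t := by
  obtain ⟨x₀, rfl⟩ := ht
  refine hlocal.self_of_nhds.lt_of_ne fun hFt ↦ ?_
  have hu₀ : deriv u x₀ = 0 := pow_eq_zero_iff two_ne_zero |>.1 (by linarith [hc x₀])
  have hF₀ : deriv F (u x₀) = 0 := IsLocalMin.deriv_eq_zero (hlocal.mono fun s hs ↦ hFt ▸ hs)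
  have hconst := eq_of_deriv_eq_zero_of_deriv_eq_zero hF hu hu' hode hu₀ hF₀
  exact hab ((hconst a).trans (hconst b).symm)

end NewtonEquation

theorem forall_mem_Icc_le_of_forall_mem_Ioo {f : ℝ → ℝ} {a b c : ℝ} (hf : Continuous f)
    (hab : a < b) (h : ∀ t ∈ Ioo a b, c ≤ f t) : ∀ t ∈ Icc a b, c ≤ f t := by
  rw [← closure_Ioo hab.ne]
  exact (isClosed_le continuous_const hf).closure_subset_iff.2 h

theorem eq_min_of_forall_lt {f : ℝ → ℝ} {a b c : ℝ} (hle : ∀ t ∈ Icc a b, c ≤ f t)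
    (hlt : ∀ t ∈ Ioo a b, c < f t) (hmin : ∃ s ∈ Icc a b, f s ≤ c) : c = min (f a) (f b) := by
  obtain ⟨s, hs, hsc⟩ := hmin
  have hab : a ≤ b := hs.1.trans hs.2
  refine le_antisymm (le_min (hle a ⟨le_rfl, hab⟩) (hle b ⟨hab, le_rfl⟩)) ?_
  rcases eq_endpoints_or_mem_Ioo_of_mem_Icc hs with rfl | rfl | hs'
  · exact (min_le_left _ _).trans hsc
  · exact (min_le_right _ _).trans hsc
  · exact absurd hsc (hlt s hs').not_ge

theorem stmt_8 (F u : ℝ → ℝ) (hF : ContDiff ℝ 2 F) (hu : ContDiff ℝ 3 u)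
    (hbdd : ∃ M : ℝ, ∀ x : ℝ, |u x| ≤ M)
    (hnc : ∃ a b : ℝ, u a ≠ u b)
    (hode : ∀ x : ℝ, deriv (deriv u) x = deriv F (u x)) :
    (⨅ y : ℝ, F (u y)) = min (F (⨅ x : ℝ, u x)) (F (⨆ x : ℝ, u x)) ∧
    (∀ t : ℝ, (⨅ x : ℝ, u x) < t → t < (⨆ x : ℝ, u x) →
      (⨅ y : ℝ, F (u y)) < F t) := by
  obtain ⟨B, hB⟩ := hbdd
  obtain ⟨a, b, hab⟩ := hnc
  have hud : Differentiable ℝ u := hu.differentiable (by norm_num)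
  have hu'd : Differentiable ℝ (deriv u) := (hu.deriv' (n := 2)).differentiable (by norm_num)
  have hc := energy_eq_iInf (hF.differentiable (by norm_num)) hud hu'd hode hB
  set c := ⨅ y, F (u y)
  set m := ⨅ x, u x
  set M := ⨆ x, u x
  have hbelow : BddBelow (range u) := ⟨-B, forall_mem_range.2 fun x ↦ (abs_le.1 (hB x)).1⟩
  have habove : BddAbove (range u) := ⟨B, forall_mem_range.2 fun x ↦ (abs_le.1 (hB x)).2⟩
  have hrange : range u ⊆ Icc m M := subset_Icc_csInf_csSup hbelow habove
  have hIoo : Ioo m M ⊆ range u :=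
    (isConnected_range hu.continuous).Ioo_csInf_csSup_subset hbelow habove
  have hmM : m < M :=
    calc m ≤ min (u a) (u b) := le_min (hrange ⟨a, rfl⟩).1 (hrange ⟨b, rfl⟩).1
      _ < max (u a) (u b) := min_lt_max.2 hab
      _ ≤ M := max_le (hrange ⟨a, rfl⟩).2 (hrange ⟨b, rfl⟩).2
  have hle : ∀ t ∈ Icc m M, c ≤ F t :=
    forall_mem_Icc_le_of_forall_mem_Ioo hF.continuous hmM fun t ht ↦ by
      obtain ⟨x, rfl⟩ := hIoo ht
      linarith [hc x, sq_nonneg (deriv u x)]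
  have hlt : ∀ t ∈ Ioo m M, c < F t := fun t ht ↦
    energy_lt_of_eventually_le hF.deriv' hud hu'd hode hab hc (hIoo ht)
      (mem_of_superset (Icc_mem_nhds ht.1 ht.2) hle)
  obtain ⟨s, hs, hsmin⟩ := isCompact_Icc.exists_isMinOn (nonempty_Icc.2 hmM.le)
    hF.continuous.continuousOn
  exact ⟨eq_min_of_forall_lt hle hlt ⟨s, hs, le_ciInf fun y ↦ hsmin (hrange ⟨y, rfl⟩)⟩,
    fun t h₁ h₂ ↦ hlt t ⟨h₁, h₂⟩⟩
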